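/- arXiv:0909.0363 — 5 statements merged into one kernel-verified Lean document; each statement's English description precedes it below -/
import Mathlib

section
/- Let n > 1, s(t) = (2n(n+1)/(n-1)·(t+1))^{1/(n+1)}, and u(x,t) = (1/s(t))·(1-(x/s(t))²)^{1/(n-1)} for 0 ≤ x < s(t). Then the interface satisfies ṡ(t) = -(n/(n-1)) · lim_{x→s(t)⁻} ∂ₓ(u^{n-1})(x,t). -/
/-!
On the support the pressure `u ^ (n - 1)` of the Barenblatt–Pattle profile of radius `a` is the
parabola `(1 - (x / a) ^ 2) / a ^ (n - 1)`, whose slope at the interface is `-2 / a ^ n`. The radius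
satisfies `s ^ (n + 1) = K (t + 1)` with `K = 2n(n+1)/(n-1)`, so `ṡ = K / ((n + 1) s ^ n)`, which is
`2n / ((n - 1) s ^ n)`.
-/

open Real Set Filter Topology

lemma tendsto_deriv_nhdsLT_of_eqOn {f g g' : ℝ → ℝ} {a b : ℝ} (hba : b < a)
    (hfg : EqOn f g (Ioo b a)) (hg : ∀ x ∈ Ioo b a, HasDerivAt g (g' x) x)
    (hg' : ContinuousWithinAt g' (Iio a) a) :
    Tendsto (deriv f) (𝓝[<] a) (𝓝 (g' a)) := by
  refine hg'.tendsto.congr' ?_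
  filter_upwards [Ioo_mem_nhdsLT hba] with x hx
  have hfg_near : f =ᶠ[𝓝 x] g := eventuallyEq_of_mem (isOpen_Ioo.mem_nhds hx) hfg
  exact ((hg x hx).congr_of_eventuallyEq hfg_near).deriv.symm

lemma barenblatt_pressure_eq {a m x : ℝ} (ha : 0 < a) (hm : m ≠ 0) (hx₀ : 0 ≤ x) (hxa : x < a) :
    (1 / a * (1 - (x / a) ^ 2) ^ (1 / m)) ^ m = (1 - (x / a) ^ 2) / a ^ m := by
  have hx_div : x / a < 1 := (div_lt_one ha).2 hxa
  have hbase : 0 ≤ 1 - (x / a) ^ 2 := by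
    nlinarith [div_nonneg hx₀ ha.le]
  rw [mul_rpow (by positivity) (rpow_nonneg hbase _), one_div m, rpow_inv_rpow hbase hm,
    div_rpow zero_le_one ha.le, one_rpow]
  ring

lemma tendsto_deriv_barenblatt_pressure {m a : ℝ} (hm : m ≠ 0) (ha : 0 < a) {v : ℝ → ℝ}
    (hv : ∀ x, 0 ≤ x → x < a → v x = 1 / a * (1 - (x / a) ^ 2) ^ (1 / m)) :
    Tendsto (deriv fun x => v x ^ m) (𝓝[<] a) (𝓝 (-2 / a ^ (m + 1))) := by
  have hslope : -2 * a / a ^ 2 / a ^ m = -2 / a ^ (m + 1) := by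
    rw [rpow_add_one ha.ne']
    field_simp
  rw [← hslope]
  refine tendsto_deriv_nhdsLT_of_eqOn (g := fun x => (1 - (x / a) ^ 2) / a ^ m)
    (g' := fun x => -2 * x / a ^ 2 / a ^ m) ha
    (fun x hx => by simp only [hv x hx.1.le hx.2, barenblatt_pressure_eq ha hm hx.1.le hx.2])
    (fun x _ => ?_) (by fun_prop)
  refine HasDerivAt.congr_deriv
    (((((hasDerivAt_id' x).div_const a).fun_pow 2).const_sub 1).div_const (a ^ m)) ?_
  norm_num
  ring

lemma HasDerivAt.rpow_one_div {f : ℝ → ℝ} {f' t p : ℝ} (hf : HasDerivAt f f' t)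
    (hpos : 0 < f t) (hp : p ≠ 0) :
    HasDerivAt (fun τ => f τ ^ (1 / p)) (f' / p / (f t ^ (1 / p)) ^ (p - 1)) t := by
  have hpow : (f t ^ (1 / p)) ^ (p - 1) = (f t ^ (1 / p - 1))⁻¹ := by
    rw [← rpow_mul hpos.le, ← rpow_neg hpos.le]
    congr 1
    field_simp
    ring
  convert hf.rpow_const (p := 1 / p) (Or.inl hpos.ne') using 1
  rw [hpow]
  field_simp

/-- The interface of the Barenblatt–Pattle solution satisfies
`ṡ(t) = -(n/(n-1)) · lim_{x→s(t)⁻} ∂ₓ(u^{n-1})(x,t)`. -/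
theorem barenblatt_interface_ode (n : ℝ) (hn : 1 < n) (s : ℝ → ℝ) (u : ℝ → ℝ → ℝ)
    (hs : ∀ t : ℝ, s t = (2*n*(n+1)/(n-1) * (t+1)) ^ ((1:ℝ)/(n+1)))
    (hu : ∀ x t : ℝ, 0 ≤ x → x < s t →
      u x t = (1 / s t) * (1 - (x / s t)^2) ^ ((1:ℝ)/(n-1))) :
    ∀ t : ℝ, 0 < t → ∃ L : ℝ,
      Tendsto (fun x => deriv (fun y => u y t ^ (n-1)) x)
        (nhdsWithin (s t) (Set.Iio (s t))) (nhds L) ∧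
      deriv s t = -(n/(n-1)) * L := by
  intro t ht
  have hn₁ : 0 < n - 1 := by linarith
  have hA : 0 < 2*n*(n+1)/(n-1) * (t+1) := by
    have : 0 < 2*n*(n+1)/(n-1) := div_pos (by nlinarith) hn₁
    positivity
  have hst : 0 < s t := hs t ▸ rpow_pos_of_pos hA _
  refine ⟨-2 / s t ^ (n - 1 + 1), tendsto_deriv_barenblatt_pressure hn₁.ne' hst (hu · t), ?_⟩
  have hradicand : HasDerivAt (fun τ => 2*n*(n+1)/(n-1) * (τ+1)) (2*n*(n+1)/(n-1)) t := by
    simpa using ((hasDerivAt_id t).add_const 1).const_mul (2*n*(n+1)/(n-1))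
  have hds : HasDerivAt s _ t := funext hs ▸ hradicand.rpow_one_div hA (p := n + 1) (by linarith)
  rw [hds.deriv, ← hs t, sub_add_cancel, add_sub_cancel_right]
  field_simp
end

section
/- Let f : ℝ → ℝ be continuously differentiable on (-∞, ξ₀), positive and strictly decreasing on (-∞, ξ₀), with f(ξ) → 0 as ξ → ξ₀⁻. Suppose n > q > 0, n ≠ q, θ₀ > 0, and (fⁿ)'(ξ) = -θ₀·f(ξ)^q + o(f(ξ)^q) as ξ → ξ₀⁻. Then f(ξ) ~ d^β·(ξ₀-ξ)^β as ξ → ξ₀⁻, where β = 1/(n-q) and d = θ₀(n-q)/n. -/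
open Real Set Filter Topology

/-! The function `g = f ^ (n - q)` satisfies `g' = (n - q)/n · (fⁿ)'/f^q → -d` and `g → 0`
at `ξ₀⁻`, so by L'Hôpital `g(ξ) ~ d (ξ₀ - ξ)`; taking `(n - q)`-th roots gives the profile. -/

theorem tendsto_div_sub_nhdsLT_of_hasDerivAt {g g' : ℝ → ℝ} {a L : ℝ}
    (hderiv : ∀ᶠ x in 𝓝[<] a, HasDerivAt g (g' x) x)
    (hg : Tendsto g (𝓝[<] a) (𝓝 0)) (hg' : Tendsto g' (𝓝[<] a) (𝓝 (-L))) :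
    Tendsto (fun x => g x / (a - x)) (𝓝[<] a) (𝓝 L) := by
  have hsub : Tendsto (fun x : ℝ => a - x) (𝓝[<] a) (𝓝 0) := by
    simpa using ((continuous_sub_left a).tendsto a).mono_left nhdsWithin_le_nhds
  refine HasDerivAt.lhopital_zero_nhdsLT (g' := fun _ => -1) hderiv
    (Eventually.of_forall fun x => by simpa using (hasDerivAt_id x).const_sub a)
    (Eventually.of_forall fun _ => by norm_num) hg hsub ?_
  simpa [div_neg] using hg'.neg

theorem hasDerivAt_rpow_sub {f : ℝ → ℝ} {x n q : ℝ} (hf : DifferentiableAt ℝ f x)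
    (hx : 0 < f x) (hn : n ≠ 0) :
    HasDerivAt (fun y => f y ^ (n - q))
      ((n - q) / n * (deriv (fun y => f y ^ n) x / f x ^ q)) x := by
  have hpow : f x ^ (n - q - 1) * f x ^ q = f x ^ (n - 1) := by
    rw [← rpow_add hx]; ring_nf
  convert hf.hasDerivAt.rpow_const (p := n - q) (Or.inl hx.ne') using 1
  rw [(hf.hasDerivAt.rpow_const (p := n) (Or.inl hx.ne')).deriv, ← hpow]
  field_simp

theorem tendsto_div_rpow_inv_of_tendsto_rpow_div {α : Type*} {l : Filter α} {f v : α → ℝ}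
    {m : ℝ} (hm : m ≠ 0) (hf : ∀ᶠ x in l, 0 ≤ f x) (hv : ∀ᶠ x in l, 0 ≤ v x)
    (h : Tendsto (fun x => f x ^ m / v x) l (𝓝 1)) :
    Tendsto (fun x => f x / v x ^ (1 / m)) l (𝓝 1) := by
  have hroot : Tendsto (fun x => (f x ^ m / v x) ^ (1 / m)) l (𝓝 1) := by
    simpa using h.rpow_const (p := 1 / m) (Or.inl one_ne_zero)
  refine hroot.congr' ?_
  filter_upwards [hf, hv] with x hfx hvx
  rw [div_rpow (rpow_nonneg hfx m) hvx, ← rpow_mul hfx, mul_one_div_cancel hm, rpow_one]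

theorem front_profile_asymptotics_general (f : ℝ → ℝ) (ξ₀ n q θ₀ : ℝ)
    (hf : ContDiffOn ℝ 1 f (Set.Iio ξ₀))
    (hpos : ∀ ξ < ξ₀, 0 < f ξ)
    (hlim : Tendsto f (nhdsWithin ξ₀ (Set.Iio ξ₀)) (nhds 0))
    (hq : 0 < q) (hqn : q < n)
    (hθ : 0 < θ₀)
    (hasymp : Tendsto (fun ξ => deriv (fun y => f y ^ n) ξ / f ξ ^ q)
      (nhdsWithin ξ₀ (Set.Iio ξ₀)) (nhds (-θ₀))) :
    Tendsto
      (fun ξ => f ξ /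
        ((θ₀*(n-q)/n) ^ ((1:ℝ)/(n-q)) * (ξ₀ - ξ) ^ ((1:ℝ)/(n-q))))
      (nhdsWithin ξ₀ (Set.Iio ξ₀)) (nhds 1) := by
  have hn : 0 < n := hq.trans hqn
  have hm : 0 < n - q := sub_pos.mpr hqn
  have hd : 0 < θ₀ * (n - q) / n := by positivity
  have hderiv : ∀ᶠ ξ in 𝓝[<] ξ₀, HasDerivAt (fun y => f y ^ (n - q))
      ((n - q) / n * (deriv (fun y => f y ^ n) ξ / f ξ ^ q)) ξ :=
    eventually_mem_nhdsWithin.mono fun ξ hξ => hasDerivAt_rpow_sub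
      ((hf.differentiableOn one_ne_zero).differentiableAt (isOpen_Iio.mem_nhds hξ))
      (hpos ξ hξ) hn.ne'
  have hg : Tendsto (fun ξ => f ξ ^ (n - q)) (𝓝[<] ξ₀) (𝓝 0) := by
    simpa [zero_rpow hm.ne'] using hlim.rpow_const (p := n - q) (Or.inr hm.le)
  have hslope := tendsto_div_sub_nhdsLT_of_hasDerivAt (L := θ₀ * (n - q) / n) hderiv hg
    (by convert hasymp.const_mul ((n - q) / n) using 2; ring)
  have hratio : Tendsto (fun ξ => f ξ ^ (n - q) / (θ₀ * (n - q) / n * (ξ₀ - ξ)))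
      (𝓝[<] ξ₀) (𝓝 1) := by
    simpa [div_self hd.ne', div_div, mul_comm] using hslope.div_const (θ₀ * (n - q) / n)
  refine (tendsto_div_rpow_inv_of_tendsto_rpow_div hm.ne'
    (eventually_mem_nhdsWithin.mono fun ξ hξ => (hpos ξ hξ).le)
    (eventually_mem_nhdsWithin.mono fun ξ hξ => mul_nonneg hd.le (sub_pos.mpr hξ).le) hratio).congr' ?_
  filter_upwards [eventually_mem_nhdsWithin] with ξ hξ
  rw [mul_rpow hd.le (sub_pos.mpr hξ).le]

/-- Asymptotic front profile of a travelling semi-wave: from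
`(fⁿ)'(ξ) = -θ₀ f(ξ)^q + o(f(ξ)^q)` as `ξ → ξ₀⁻` one derives
`f(ξ) ~ d^β (ξ₀-ξ)^β` with `β = 1/(n-q)`, `d = θ₀(n-q)/n`. -/
theorem front_profile_asymptotics (f : ℝ → ℝ) (ξ₀ n q θ₀ : ℝ)
    (hf : ContDiffOn ℝ 1 f (Set.Iio ξ₀))
    (hpos : ∀ ξ < ξ₀, 0 < f ξ)
    (hdec : StrictAntiOn f (Set.Iio ξ₀))
    (hlim : Tendsto f (nhdsWithin ξ₀ (Set.Iio ξ₀)) (nhds 0))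
    (hq : 0 < q) (hqn : q < n)
    (hθ : 0 < θ₀)
    (hasymp : Tendsto (fun ξ => deriv (fun y => f y ^ n) ξ / f ξ ^ q)
      (nhdsWithin ξ₀ (Set.Iio ξ₀)) (nhds (-θ₀))) :
    Tendsto
      (fun ξ => f ξ /
        ((θ₀*(n-q)/n) ^ ((1:ℝ)/(n-q)) * (ξ₀ - ξ) ^ ((1:ℝ)/(n-q))))
      (nhdsWithin ξ₀ (Set.Iio ξ₀)) (nhds 1) :=
  front_profile_asymptotics_general f ξ₀ n q θ₀ hf hpos hlim hq hqn hθ hasymp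
end

section
/- Let 1 < p < 2, C₀ > 0, α > 0, L₀ > 0. Define a(t) = (2p(p+1)/(p-1))·t + (p-1)·α, q_r = 1/(p-1), and u(x,t) = a(t)^{-q_r}·[ K·a(t)^{2/(p+1)} - (C₀(p-1)²/(4p²))·a(t)² - x² ]_+^{q_r}, where K = (C₀(p-1)⁴α² + 4p²L₀²)/(4p²((p-1)α)^{2/(p+1)}) and [z]_+ = max(z,0). Then at every point (x,t), t > 0, where the bracket is strictly positive, u satisfies ∂ₜu = ∂ₓ²(u^p) - C₀·u^{2-p}. -/
/-!
Write `q = 1/(p-1)` and `B = K a^{2/(p+1)} - D a² - x²` with `D = C₀(p-1)²/(4p²)`, so that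
`u = a^{-q} B^q`. Since `qp = q + 1` and `q(2-p) = q - 1`, each of `∂ₜu`, `∂ₓ²(u^p)` and
`C₀ u^{2-p}` is `a^{-q-1} B^{q-1}` times a polynomial in `B`, `x²`, `K a^{2/(p+1)}` and `a²`
(using `a' = 2p(p+1)/(p-1)`). Eliminating `x²` through the definition of `B`, the PDE reduces to
matching the coefficients of `B`, `K a^{2/(p+1)}` and `a²`; these three conditions are exactly
what fix the slope of `a`, the exponent `2/(p+1)` and `D`.
-/

open Real Filter Topology

lemma hasDerivAt_rpow_neg_mul_rpow {f g : ℝ → ℝ} {f' g' t : ℝ} (q : ℝ)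
    (hf : HasDerivAt f f' t) (hg : HasDerivAt g g' t) (hf0 : 0 < f t) (hg0 : 0 < g t) :
    HasDerivAt (fun τ => f τ ^ (-q) * g τ ^ q)
      (f t ^ (-q - 1) * g t ^ (q - 1) * (q * (f t * g' - f' * g t))) t := by
  refine ((hf.rpow_const (Or.inl hf0.ne')).mul (hg.rpow_const (Or.inl hg0.ne'))).congr_deriv ?_
  rw [rpow_sub_one hf0.ne', rpow_sub_one hg0.ne']
  field_simp
  ring

lemma hasDerivAt_mul_rpow_sub_mul_sq_sub {f : ℝ → ℝ} {c t : ℝ} (K σ D x : ℝ)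
    (hf : HasDerivAt f c t) (hf0 : 0 < f t) :
    HasDerivAt (fun τ => K * f τ ^ σ - D * f τ ^ 2 - x ^ 2)
      (c * (σ * K * f t ^ σ - 2 * D * f t ^ 2) / f t) t := by
  have hsq : HasDerivAt (fun τ => f τ ^ 2) (2 * f t * c) t :=
    (hf.fun_pow 2).congr_deriv (by norm_num)
  refine ((((hf.rpow_const (p := σ) (Or.inl hf0.ne')).const_mul K).sub
    (hsq.const_mul D)).sub_const (x ^ 2)).congr_deriv ?_
  rw [rpow_sub_one hf0.ne']
  field_simp

lemma eventually_lt_sub_sq {A x : ℝ} (hx : 0 < A - x ^ 2) : ∀ᶠ y in 𝓝 x, 0 < A - y ^ 2 :=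
  (continuous_const.sub (continuous_pow 2)).continuousAt.eventually (eventually_gt_nhds hx)

lemma hasDerivAt_sub_sq_rpow {A r x : ℝ} (hx : 0 < A - x ^ 2) :
    HasDerivAt (fun y => (A - y ^ 2) ^ r) (-2 * r * x * (A - x ^ 2) ^ (r - 1)) x := by
  refine (((hasDerivAt_pow 2 x).const_sub A).rpow_const (Or.inl hx.ne')).congr_deriv ?_
  push_cast
  ring

lemma deriv_deriv_mul_sub_sq_rpow {A r x : ℝ} (k : ℝ) (hx : 0 < A - x ^ 2) :
    deriv (deriv fun y => k * (A - y ^ 2) ^ r) x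
      = k * ((A - x ^ 2) ^ (r - 2) * (4 * r * (r - 1) * x ^ 2 - 2 * r * (A - x ^ 2))) := by
  have hderiv : deriv (fun y => (A - y ^ 2) ^ r) =ᶠ[𝓝 x]
      fun y => -2 * r * y * (A - y ^ 2) ^ (r - 1) :=
    (eventually_lt_sub_sq hx).mono fun y hy => (hasDerivAt_sub_sq_rpow hy).deriv
  have h : HasDerivAt (fun y => -2 * r * y * (A - y ^ 2) ^ (r - 1)) _ x :=
    ((hasDerivAt_id' x).const_mul (-2 * r)).mul (hasDerivAt_sub_sq_rpow hx)
  simp only [deriv_const_mul_field']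
  rw [hderiv.deriv_eq, h.deriv,
    show r - 2 = r - 1 - 1 by ring, rpow_sub_one hx.ne' (r - 1)]
  field_simp
  ring

lemma rpow_neg_mul_rpow_rpow {s B : ℝ} (hs : 0 ≤ s) (hB : 0 ≤ B) (q e : ℝ) :
    (s ^ (-q) * B ^ q) ^ e = s ^ (-(q * e)) * B ^ (q * e) := by
  rw [mul_rpow (rpow_nonneg hs _) (rpow_nonneg hB _), ← rpow_mul hs, ← rpow_mul hB, neg_mul]

lemma kersner_balance {p : ℝ} (hp : 1 < p) (C₀ K a m x : ℝ) :
    let q := 1 / (p - 1)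
    let D := C₀ * (p - 1) ^ 2 / (4 * p ^ 2)
    let c := 2 * p * (p + 1) / (p - 1)
    let B := K * m - D * a ^ 2 - x ^ 2
    q * (c * (2 / (p + 1) * K * m - 2 * D * a ^ 2) - c * B)
      = 4 * (q + 1) * q * x ^ 2 - 2 * (q + 1) * B - C₀ * a ^ 2 := by
  intro q D c B
  have : p - 1 ≠ 0 := by linarith
  have : p + 1 ≠ 0 := by linarith
  have : p ≠ 0 := by linarith
  simp only [q, D, c, B]
  field_simp
  ring

theorem kersner_solves_pde_general (p C₀ α : ℝ)
    (hp1 : 1 < p) (hα : 0 < α)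
    (a : ℝ → ℝ) (ha : ∀ t : ℝ, a t = (2*p*(p+1)/(p-1)) * t + (p-1)*α)
    (K : ℝ)
    (u : ℝ → ℝ → ℝ)
    (hu : ∀ x t : ℝ, u x t = a t ^ (-(1/(p-1))) *
      (max (K * a t ^ ((2:ℝ)/(p+1)) - (C₀*(p-1)^2/(4*p^2)) * a t ^ 2 - x^2) 0)
        ^ ((1:ℝ)/(p-1))) :
    ∀ x t : ℝ, 0 < t →
      0 < K * a t ^ ((2:ℝ)/(p+1)) - (C₀*(p-1)^2/(4*p^2)) * a t ^ 2 - x^2 →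
      deriv (fun τ => u x τ) t
        = deriv (deriv (fun y => u y t ^ p)) x - C₀ * u x t ^ (2-p) := by
  intro x t ht hB
  set q : ℝ := 1 / (p - 1) with hq
  set σ : ℝ := 2 / (p + 1)
  set D : ℝ := C₀ * (p - 1) ^ 2 / (4 * p ^ 2)
  set c : ℝ := 2 * p * (p + 1) / (p - 1)
  set B : ℝ := K * a t ^ σ - D * a t ^ 2 - x ^ 2
  have hp : p - 1 ≠ 0 := by linarith
  have hat : 0 < a t := by
    have := sub_pos.2 hp1
    rw [ha]
    positivity
  have ha' : HasDerivAt a c t := by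
    rw [show a = fun τ => c * τ + (p - 1) * α from funext ha]
    simpa using ((hasDerivAt_id t).const_mul c).add_const ((p - 1) * α)
  have hu_pos : ∀ y τ, 0 < K * a τ ^ σ - D * a τ ^ 2 - y ^ 2 →
      u y τ = a τ ^ (-q) * (K * a τ ^ σ - D * a τ ^ 2 - y ^ 2) ^ q := fun y τ h => by
    rw [hu, max_eq_left h.le]
  have hdt : deriv (fun τ => u x τ) t
      = a t ^ (-q - 1) * B ^ (q - 1) * (q * (c * (σ * K * a t ^ σ - 2 * D * a t ^ 2) - c * B)) := by
    have hB' := hasDerivAt_mul_rpow_sub_mul_sq_sub K σ D x ha' hat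
    have hnear : (fun τ => u x τ) =ᶠ[𝓝 t] _ :=
      (hB'.continuousAt.eventually (eventually_gt_nhds hB)).mono fun τ h => hu_pos x τ h
    rw [hnear.deriv_eq, (hasDerivAt_rpow_neg_mul_rpow q ha' hB' hat hB).deriv,
      mul_div_cancel₀ _ hat.ne']
  have hdxx : deriv (deriv fun y => u y t ^ p) x
      = a t ^ (-q - 1) * (B ^ (q - 1) * (4 * (q + 1) * q * x ^ 2 - 2 * (q + 1) * B)) := by
    have hnear : (fun y => u y t ^ p) =ᶠ[𝓝 x]
        fun y => a t ^ (-q - 1) * (K * a t ^ σ - D * a t ^ 2 - y ^ 2) ^ (q + 1) := by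
      filter_upwards [eventually_lt_sub_sq hB] with y hy
      rw [hu_pos y t hy, rpow_neg_mul_rpow_rpow hat.le hy.le,
        show q * p = q + 1 by rw [hq]; field_simp; ring, neg_add']
    rw [hnear.deriv.deriv_eq, deriv_deriv_mul_sub_sq_rpow _ hB, show q + 1 - 2 = q - 1 by ring,
      add_sub_cancel_right]
  have hzero : u x t ^ (2 - p) = a t ^ (-q - 1) * B ^ (q - 1) * a t ^ 2 := by
    rw [hu_pos x t hB, rpow_neg_mul_rpow_rpow hat.le hB.le,
      show q * (2 - p) = q - 1 by rw [hq]; field_simp; ring,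
      show -(q - 1) = -q - 1 + (2 : ℕ) by push_cast; ring, rpow_add_natCast hat.ne']
    ring
  rw [hdt, hdxx, hzero]
  linear_combination (a t ^ (-q - 1) * B ^ (q - 1)) * kersner_balance hp1 C₀ K (a t) (a t ^ σ) x

/-- Kersner's explicit solution satisfies `∂ₜu = ∂ₓ²(u^p) - C₀ u^{2-p}` at every
point where the bracket is strictly positive. -/
theorem kersner_solves_pde (p C₀ α L₀ : ℝ)
    (hp1 : 1 < p) (hp2 : p < 2) (hC : 0 < C₀) (hα : 0 < α) (hL : 0 < L₀)
    (a : ℝ → ℝ) (ha : ∀ t : ℝ, a t = (2*p*(p+1)/(p-1)) * t + (p-1)*α)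
    (K : ℝ)
    (hK : K = (C₀*(p-1)^4*α^2 + 4*p^2*L₀^2) / (4*p^2*((p-1)*α) ^ ((2:ℝ)/(p+1))))
    (u : ℝ → ℝ → ℝ)
    (hu : ∀ x t : ℝ, u x t = a t ^ (-(1/(p-1))) *
      (max (K * a t ^ ((2:ℝ)/(p+1)) - (C₀*(p-1)^2/(4*p^2)) * a t ^ 2 - x^2) 0)
        ^ ((1:ℝ)/(p-1))) :
    ∀ x t : ℝ, 0 < t →
      0 < K * a t ^ ((2:ℝ)/(p+1)) - (C₀*(p-1)^2/(4*p^2)) * a t ^ 2 - x^2 →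
      deriv (fun τ => u x τ) t
        = deriv (deriv (fun y => u y t ^ p)) x - C₀ * u x t ^ (2-p) :=
  kersner_solves_pde_general p C₀ α hp1 hα a ha K u hu
end

section
/- Let 1 < p < 2, C₀ > 0 and let u be Kersner's explicit solution of ∂ₜu = ∂ₓ²u^p - C₀u^{2-p} with interface s(t) (the positive root of the bracket). Set β = 1/(p-1) and w = u^{p-1}. Then the interface satisfies the ODE ṡ(t) = -(p/(p-1))·∂ₓw(s(t),t) + C₀(p-1)/∂ₓw(s(t),t), where ∂ₓw(s(t),t) denotes the one-sided limit of ∂ₓw as x → s(t)⁻. -/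
/-!
Inside the support, `w = u^{p-1}` is the parabola `(s(t)² - x²)/a(t)`, so `∂ₓw → -2s/a` at
the interface. Since `ȧ = 2p(p+1)/(p-1)`, the squared interface
`s² = K a^{2/(p+1)} - C₀(p-1)²a²/(4p²)` satisfies `d(s²)/dt = 4p s²/((p-1)a) - C₀(p-1)a`,
which is the claimed ODE written in terms of `∂ₓw = -2s/a`.
-/

open Real Set Filter Topology

/-- The square of the interface `s(t)` as a function of `a = a(t)`. -/
noncomputable def kersnerBracket (p C₀ K a : ℝ) : ℝ :=
  K * a ^ ((2:ℝ)/(p+1)) - (C₀*(p-1)^2/(4*p^2)) * a ^ 2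

lemma rpow_neg_one_div_mul_rpow_one_div_rpow {a z q : ℝ} (ha : 0 ≤ a) (hz : 0 ≤ z)
    (hq : q ≠ 0) : (a ^ (-(1/q)) * z ^ (1/q)) ^ q = z / a := by
  rw [mul_rpow (rpow_nonneg ha _) (rpow_nonneg hz _), ← rpow_mul ha, ← rpow_mul hz,
    neg_mul, one_div_mul_cancel hq, rpow_neg_one, rpow_one, div_eq_mul_inv, mul_comm]

lemma tendsto_deriv_nhdsLT_of_eqOn_Ioo {f g g' : ℝ → ℝ} {b s : ℝ} (hbs : b < s)
    (hfg : EqOn f g (Ioo b s)) (hg : ∀ x ∈ Ioo b s, HasDerivAt g (g' x) x)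
    (hg' : ContinuousWithinAt g' (Iio s) s) :
    Tendsto (deriv f) (𝓝[<] s) (𝓝 (g' s)) := by
  refine hg'.tendsto.congr' ?_
  filter_upwards [Ioo_mem_nhdsLT hbs] with x hx
  have hfg_near : f =ᶠ[𝓝 x] g := eventuallyEq_of_mem (isOpen_Ioo.mem_nhds hx) hfg
  exact ((hg x hx).congr_of_eventuallyEq hfg_near).deriv.symm

lemma tendsto_deriv_max_sub_sq_div {B c : ℝ} (hB : 0 < B) :
    Tendsto (deriv fun y => max (B - y ^ 2) 0 / c) (𝓝[<] √B) (𝓝 (-2 * √B / c)) := by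
  have hsupp : EqOn (fun y => max (B - y ^ 2) 0 / c) (fun y => (B - y ^ 2) / c) (Ioo (-√B) √B) :=
    fun y hy => by
      have : y ^ 2 < B := sq_lt.mpr hy
      simp only [max_eq_left (sub_nonneg.mpr this.le)]
  refine tendsto_deriv_nhdsLT_of_eqOn_Ioo (g' := fun y => -2 * y / c)
    (by linarith [sqrt_pos.mpr hB]) hsupp (fun x _ => ?_) (by fun_prop)
  refine (((hasDerivAt_pow 2 x).const_sub B).div_const c).congr_deriv ?_
  ring

variable {p C₀ K : ℝ}

lemma hasDerivAt_kersnerBracket_comp {a : ℝ → ℝ} {t : ℝ} (hp : 1 < p)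
    (ha : HasDerivAt a (2*p*(p+1)/(p-1)) t) (hat : 0 < a t) :
    HasDerivAt (fun τ => kersnerBracket p C₀ K (a τ))
      (4*p/((p-1) * a t) * kersnerBracket p C₀ K (a t) - C₀*(p-1) * a t) t := by
  have hderiv := ((ha.rpow_const (p := (2:ℝ)/(p+1)) (Or.inl hat.ne')).const_mul K).sub
    ((ha.pow 2).const_mul (C₀*(p-1)^2/(4*p^2)))
  refine hderiv.congr_deriv ?_
  have hp0 : p - 1 ≠ 0 := by linarith
  have hp1 : p + 1 ≠ 0 := by linarith
  simp only [kersnerBracket, rpow_sub hat, rpow_one]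
  push_cast
  field_simp
  ring

lemma kersner_interface_speed_eq {A a : ℝ} (hp : p - 1 ≠ 0) (ha : a ≠ 0) (hA : 0 < A) :
    (4*p/((p-1) * a) * A - C₀*(p-1) * a) / (2 * √A)
      = -(p/(p-1)) * (-2 * √A / a) + C₀*(p-1) / (-2 * √A / a) := by
  have hsqrt : √A ^ 2 = A := sq_sqrt hA.le
  field_simp
  linear_combination -4 * p * hsqrt

theorem kersner_interface_ode_general (p C₀ α : ℝ)
    (hp1 : 1 < p) (hα : 0 < α)
    (a : ℝ → ℝ) (ha : ∀ t : ℝ, a t = (2*p*(p+1)/(p-1)) * t + (p-1)*α)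
    (K : ℝ)
    (u : ℝ → ℝ → ℝ)
    (hu : ∀ x t : ℝ, u x t = a t ^ (-(1/(p-1))) *
      (max (K * a t ^ ((2:ℝ)/(p+1)) - (C₀*(p-1)^2/(4*p^2)) * a t ^ 2 - x^2) 0)
        ^ ((1:ℝ)/(p-1)))
    (s : ℝ → ℝ)
    (hsdef : ∀ t : ℝ,
      s t = Real.sqrt (K * a t ^ ((2:ℝ)/(p+1)) - (C₀*(p-1)^2/(4*p^2)) * a t ^ 2)) :
    ∀ t : ℝ, 0 < t →
      0 < K * a t ^ ((2:ℝ)/(p+1)) - (C₀*(p-1)^2/(4*p^2)) * a t ^ 2 →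
      ∃ L : ℝ,
        Tendsto (fun x => deriv (fun y => u y t ^ (p-1)) x)
          (nhdsWithin (s t) (Set.Iio (s t))) (nhds L) ∧
        deriv s t = -(p/(p-1)) * L + C₀*(p-1) / L := by
  intro t ht hA
  have hp : p - 1 ≠ 0 := by linarith
  have hat : 0 < a t := by
    rw [ha]
    have : 0 < 2*p*(p+1)/(p-1) := by apply div_pos <;> nlinarith
    positivity
  have hpressure :
      (fun y => u y t ^ (p-1)) = fun y => max (kersnerBracket p C₀ K (a t) - y^2) 0 / a t :=
    funext fun y => by
      rw [hu, rpow_neg_one_div_mul_rpow_one_div_rpow hat.le (le_max_right _ _) hp]; rfl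
  have ha' : HasDerivAt a (2*p*(p+1)/(p-1)) t := by
    rw [funext ha]
    simpa using ((hasDerivAt_id t).const_mul _).add_const ((p-1)*α)
  have hs : HasDerivAt s ((4*p/((p-1) * a t) * kersnerBracket p C₀ K (a t) - C₀*(p-1) * a t)
      / (2 * √(kersnerBracket p C₀ K (a t)))) t := by
    rw [funext hsdef]
    exact (hasDerivAt_kersnerBracket_comp (C₀ := C₀) (K := K) hp1 ha' hat).sqrt hA.ne'
  refine ⟨-2 * s t / a t, ?_, ?_⟩
  · rw [hpressure, hsdef]
    exact tendsto_deriv_max_sub_sq_div hA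
  · rw [hs.deriv, hsdef]
    exact kersner_interface_speed_eq hp hat.ne' hA

/-- The interface of Kersner's solution satisfies
`ṡ = -(p/(p-1))·∂ₓw + C₀(p-1)/∂ₓw` with `w = u^{p-1}`, where `∂ₓw` at the
interface is the one-sided limit as `x → s(t)⁻`. -/
theorem kersner_interface_ode (p C₀ α L₀ : ℝ)
    (hp1 : 1 < p) (hp2 : p < 2) (hC : 0 < C₀) (hα : 0 < α) (hL : 0 < L₀)
    (a : ℝ → ℝ) (ha : ∀ t : ℝ, a t = (2*p*(p+1)/(p-1)) * t + (p-1)*α)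
    (K : ℝ)
    (hK : K = (C₀*(p-1)^4*α^2 + 4*p^2*L₀^2) / (4*p^2*((p-1)*α) ^ ((2:ℝ)/(p+1))))
    (u : ℝ → ℝ → ℝ)
    (hu : ∀ x t : ℝ, u x t = a t ^ (-(1/(p-1))) *
      (max (K * a t ^ ((2:ℝ)/(p+1)) - (C₀*(p-1)^2/(4*p^2)) * a t ^ 2 - x^2) 0)
        ^ ((1:ℝ)/(p-1)))
    (s : ℝ → ℝ)
    (hsdef : ∀ t : ℝ,
      s t = Real.sqrt (K * a t ^ ((2:ℝ)/(p+1)) - (C₀*(p-1)^2/(4*p^2)) * a t ^ 2)) :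
    ∀ t : ℝ, 0 < t →
      0 < K * a t ^ ((2:ℝ)/(p+1)) - (C₀*(p-1)^2/(4*p^2)) * a t ^ 2 →
      ∃ L : ℝ,
        Tendsto (fun x => deriv (fun y => u y t ^ (p-1)) x)
          (nhdsWithin (s t) (Set.Iio (s t))) (nhds L) ∧
        deriv s t = -(p/(p-1)) * L + C₀*(p-1) / L :=
  kersner_interface_ode_general p C₀ α hp1 hα a ha K u hu s hsdef
end

section
/- Let a₀, c₀, w be real-valued functions with a₀(x,t) ≥ δ > 0, α > 1, and suppose w is C¹ up to x = s(t) with w(s(t),t) = 0, w > 0 for x < s(t), and (α-1)·a₀·(∂ₓw)² + (c₀/α)·w^{(m-1)α+2} → 0 as x → s(t)⁻, where c₀ ≤ -δ < 0 and (m-1)α + 2 = 0 (i.e. α = 2/(1-m) with 0 ≤ m < 1). Then ∂ₓw(x,t) → -√(-c₀(s(t),t)/(α(α-1)·a₀(s(t),t))) as x → s(t)⁻, using that ∂ₓw ≤ 0 near the interface. -/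
open Real Set Filter

/-!
With `α = 2/(1-m)` the power `w ^ ((m-1)α+2)` is identically `1`, so the cancellation
hypothesis says `(α-1) a₀ (∂ₓw)² → -c₀(s,t)/α`. Continuity and positivity of `a₀` give the
limit of `(∂ₓw)²`, and the sign condition `∂ₓw ≤ 0` selects the negative square root.
-/

lemma sub_one_mul_two_div_one_sub_add_two {m : ℝ} (hm : m < 1) :
    (m - 1) * (2 / (1 - m)) + 2 = 0 := by
  have : 1 - m ≠ 0 := by linarith
  field_simp
  ring

lemma Filter.Tendsto.of_mul_add_tendsto_zero {ι : Type*} {l : Filter ι} {a b g : ι → ℝ}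
    {A B : ℝ} (h : Tendsto (fun x => a x * g x + b x) l (nhds 0))
    (ha : Tendsto a l (nhds A)) (hA : A ≠ 0) (ha' : ∀ᶠ x in l, a x ≠ 0)
    (hb : Tendsto b l (nhds B)) :
    Tendsto g l (nhds (-B / A)) := by
  have hag : Tendsto (fun x => a x * g x) l (nhds (-B)) := by
    simpa using h.sub hb
  refine (hag.div ha hA).congr' ?_
  filter_upwards [ha'] with x hx
  exact mul_div_cancel_left₀ (g x) hx

lemma Filter.Tendsto.of_sq_of_nonpos {ι : Type*} {l : Filter ι} {f : ι → ℝ} {L : ℝ}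
    (h : Tendsto (fun x => f x ^ 2) l (nhds L)) (hf : ∀ᶠ x in l, f x ≤ 0) :
    Tendsto f l (nhds (-√L)) := by
  refine h.sqrt.neg.congr' ?_
  filter_upwards [hf] with x hx
  rw [Real.sqrt_sq_eq_abs, abs_of_nonpos hx, neg_neg]

theorem oxygen_boundary_slope_general (a₀ c₀ w : ℝ → ℝ → ℝ) (s : ℝ → ℝ) (t δ α m ε : ℝ)
    (hδ : 0 < δ) (hε : 0 < ε)
    (ha : ∀ x τ : ℝ, δ ≤ a₀ x τ)
    (hm1 : m < 1) (hα : α = 2/(1-m)) (hα1 : 1 < α)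
    (ha0c : ContinuousAt (fun x => a₀ x t) (s t))
    (hc0c : ContinuousAt (fun x => c₀ x t) (s t))
    (hwd : ∀ x ∈ Set.Ioo (s t - ε) (s t), deriv (fun y => w y t) x ≤ 0)
    (hcancel : Tendsto
      (fun x => (α-1) * a₀ x t * (deriv (fun y => w y t) x)^2
        + (c₀ x t / α) * w x t ^ ((m-1)*α+2))
      (nhdsWithin (s t) (Set.Iio (s t))) (nhds 0)) :
    Tendsto (fun x => deriv (fun y => w y t) x)
      (nhdsWithin (s t) (Set.Iio (s t)))
      (nhds (-(Real.sqrt (-(c₀ (s t) t) / (α*(α-1)*a₀ (s t) t))))) := by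
  have ha_pos (x : ℝ) : 0 < (α - 1) * a₀ x t := mul_pos (by linarith) (hδ.trans_le (ha x t))
  have hexp : (m - 1) * α + 2 = 0 := hα ▸ sub_one_mul_two_div_one_sub_add_two hm1
  rw [hexp] at hcancel
  simp only [Real.rpow_zero, mul_one] at hcancel
  have hsq := hcancel.of_mul_add_tendsto_zero
    ((ha0c.tendsto.mono_left nhdsWithin_le_nhds).const_mul (α - 1)) (ha_pos (s t)).ne'
    (Eventually.of_forall fun x => (ha_pos x).ne')
    ((hc0c.tendsto.mono_left nhdsWithin_le_nhds).div_const α)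
  rw [neg_div, div_div, ← mul_assoc, ← neg_div] at hsq
  exact hsq.of_sq_of_nonpos <|
    eventually_of_mem (Ioo_mem_nhdsLT (by linarith)) hwd

/-- Boundary slope for the non-degenerate (oxygen-consumption type) problem:
cancellation of the singular terms forces
`∂ₓw → -√(-c₀/(α(α-1)a₀))` at the interface. -/
theorem oxygen_boundary_slope (a₀ c₀ w : ℝ → ℝ → ℝ) (s : ℝ → ℝ) (t δ α m ε : ℝ)
    (hδ : 0 < δ) (hε : 0 < ε)
    (ha : ∀ x τ : ℝ, δ ≤ a₀ x τ) (hc : ∀ x τ : ℝ, c₀ x τ ≤ -δ)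
    (hm0 : 0 ≤ m) (hm1 : m < 1) (hα : α = 2/(1-m)) (hα1 : 1 < α)
    (ha0c : ContinuousAt (fun x => a₀ x t) (s t))
    (hc0c : ContinuousAt (fun x => c₀ x t) (s t))
    (hw0 : w (s t) t = 0)
    (hwpos : ∀ x ∈ Set.Ioo (s t - ε) (s t), 0 < w x t)
    (hwC1 : ContDiffOn ℝ 1 (fun x => w x t) (Set.Ioc (s t - ε) (s t)))
    (hwd : ∀ x ∈ Set.Ioo (s t - ε) (s t), deriv (fun y => w y t) x ≤ 0)
    (hcancel : Tendsto
      (fun x => (α-1) * a₀ x t * (deriv (fun y => w y t) x)^2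
        + (c₀ x t / α) * w x t ^ ((m-1)*α+2))
      (nhdsWithin (s t) (Set.Iio (s t))) (nhds 0)) :
    Tendsto (fun x => deriv (fun y => w y t) x)
      (nhdsWithin (s t) (Set.Iio (s t)))
      (nhds (-(Real.sqrt (-(c₀ (s t) t) / (α*(α-1)*a₀ (s t) t))))) :=
  oxygen_boundary_slope_general a₀ c₀ w s t δ α m ε hδ hε ha hm1 hα hα1 ha0c hc0c hwd hcancel
end
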